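/- arXiv:2409.17505 — 2 statements merged into one kernel-verified Lean document; each statement's English description precedes it below -/
import Mathlib

section
/- Suppose E[‖ξ(X_1)‖_H²] < ∞ and E[M(X_1)] < ∞, and define g*(x) = E[h(X_1, x)] / E[M(X_1)]. Then almost surely (1/t) Σ_{i=1}^{t} g_i(X_i)² → E[g*(X_1)²] as t → ∞. -/
open MeasureTheory ProbabilityTheory Filter Asymptotics Finset
open scoped RealInnerProductSpace Topology

/-!
With `w n = (∑_{i ≤ n} M(X_i))⁻¹ • ∑_{i ≤ n} ξ(X_i)` and `c = E[M(X₁)]⁻¹ • E[ξ(X₁)]` one has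
`g_{n+1}(x) = ⟪w n, ξ x⟫` and `g*(x) = ⟪c, ξ x⟫`. The strong law of large numbers, in `H` and in
`ℝ`, gives almost surely `w n → c` together with the convergence of the Cesàro averages of
`‖ξ(X_i)‖²` and of `g*(X_i)²`. Since
`|⟪w, y⟫² - ⟪c, y⟫²| ≤ ‖w - c‖ (‖w - c‖ + 2‖c‖) ‖y‖²`, the errors `g_i(X_i)² - g*(X_i)²` are
`o(‖ξ(X_i)‖²)`, and a sequence negligible against nonnegative weights with bounded Cesàro averages
has Cesàro averages tending to zero.
-/

theorem sum_Icc_one_eq_sum_range {M : Type*} [AddCommMonoid M] (f : ℕ → M) (n : ℕ) :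
    ∑ i ∈ Icc 1 n, f i = ∑ i ∈ range n, f (i + 1) := by
  rw [← Ico_add_one_right_eq_Icc, sum_Ico_eq_sum_range, add_tsub_cancel_right]
  simp only [add_comm]

theorem isLittleO_sum_range_of_isLittleO {E : Type*} [NormedAddCommGroup E]
    {f : ℕ → E} {w : ℕ → ℝ} (hf : f =o[atTop] w) (hw0 : 0 ≤ w)
    (hw : (fun n => ∑ i ∈ range n, w i) =O[atTop] fun n => (n : ℝ)) :
    (fun n => ∑ i ∈ range n, f i) =o[atTop] fun n => (n : ℝ) := by
  -- shifting the weights by `1` makes their partial sums diverge, as `IsLittleO.sum_range` needs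
  have hw1 : f =o[atTop] fun i => w i + 1 :=
    hf.trans_isBigO <| isBigO_of_le _ fun i => by
      simp only [Real.norm_of_nonneg (hw0 i), Real.norm_of_nonneg (add_nonneg (hw0 i) zero_le_one)]
      linarith
  have hsum : ∀ n, ∑ i ∈ range n, (w i + 1) = ∑ i ∈ range n, w i + n := fun n => by
    simp [sum_add_distrib]
  have hdiv : Tendsto (fun n => ∑ i ∈ range n, (w i + 1)) atTop atTop := by
    refine tendsto_atTop_mono (fun n => ?_) tendsto_natCast_atTop_atTop
    rw [hsum]
    linarith [sum_nonneg fun i (_ : i ∈ range n) => hw0 i]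
  refine (hw1.sum_range (fun i => add_nonneg (hw0 i) zero_le_one) hdiv).trans_isBigO ?_
  simpa only [hsum] using hw.add (isBigO_refl _ _)

theorem tendsto_inv_smul_sum_range_of_isLittleO {E : Type*} [NormedAddCommGroup E]
    [NormedSpace ℝ E] {f : ℕ → E} {w : ℕ → ℝ} (hf : f =o[atTop] w) (hw0 : 0 ≤ w) {q : ℝ}
    (hw : Tendsto (fun n : ℕ => (n : ℝ)⁻¹ * ∑ i ∈ range n, w i) atTop (𝓝 q)) :
    Tendsto (fun n : ℕ => (n : ℝ)⁻¹ • ∑ i ∈ range n, f i) atTop (𝓝 0) := by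
  refine (isLittleO_sum_range_of_isLittleO hf hw0 ?_).tendsto_inv_smul_nhds_zero
  have hmul := (isBigO_refl (fun n : ℕ => (n : ℝ)) atTop).mul (hw.isBigO_one ℝ)
  refine hmul.congr' ?_ (by simp)
  filter_upwards [eventually_ne_atTop 0] with n hn
  field_simp

theorem abs_inner_sq_sub_inner_sq_le {H : Type*} [NormedAddCommGroup H] [InnerProductSpace ℝ H]
    (a c y : H) : |⟪a, y⟫ ^ 2 - ⟪c, y⟫ ^ 2| ≤ ‖a - c‖ * (‖a - c‖ + 2 * ‖c‖) * ‖y‖ ^ 2 := by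
  have hsub : |⟪a - c, y⟫| ≤ ‖a - c‖ * ‖y‖ := abs_real_inner_le_norm _ _
  have hadd : |⟪a + c, y⟫| ≤ (‖a - c‖ + 2 * ‖c‖) * ‖y‖ := by
    have hnorm : ‖a + c‖ ≤ ‖a - c‖ + 2 * ‖c‖ := by
      calc ‖a + c‖ = ‖(a - c) + c + c‖ := by rw [sub_add_cancel]
        _ ≤ ‖a - c‖ + ‖c‖ + ‖c‖ := norm_add₃_le
        _ = ‖a - c‖ + 2 * ‖c‖ := by ring
    exact (abs_real_inner_le_norm _ _).trans (by gcongr)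
  calc |⟪a, y⟫ ^ 2 - ⟪c, y⟫ ^ 2| = |⟪a - c, y⟫| * |⟪a + c, y⟫| := by
        rw [← abs_mul, inner_sub_left, inner_add_left]; ring_nf
    _ ≤ (‖a - c‖ * ‖y‖) * ((‖a - c‖ + 2 * ‖c‖) * ‖y‖) :=
        mul_le_mul hsub hadd (abs_nonneg _) (by positivity)
    _ = ‖a - c‖ * (‖a - c‖ + 2 * ‖c‖) * ‖y‖ ^ 2 := by ring

theorem tendsto_inv_mul_sum_range_inner_sq {H : Type*} [NormedAddCommGroup H]
    [InnerProductSpace ℝ H] {a y : ℕ → H} {c : H} (ha : Tendsto a atTop (𝓝 c)) {q L : ℝ}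
    (hy : Tendsto (fun n : ℕ => (n : ℝ)⁻¹ * ∑ i ∈ range n, ‖y i‖ ^ 2) atTop (𝓝 q))
    (hcy : Tendsto (fun n : ℕ => (n : ℝ)⁻¹ * ∑ i ∈ range n, ⟪c, y i⟫ ^ 2) atTop (𝓝 L)) :
    Tendsto (fun n : ℕ => (n : ℝ)⁻¹ * ∑ i ∈ range n, ⟪a i, y i⟫ ^ 2) atTop (𝓝 L) := by
  set δ : ℕ → ℝ := fun i => ‖a i - c‖ * (‖a i - c‖ + 2 * ‖c‖)
  have hδ : Tendsto δ atTop (𝓝 0) := by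
    have hd : Tendsto (fun i => ‖a i - c‖) atTop (𝓝 0) := tendsto_iff_norm_sub_tendsto_zero.1 ha
    simpa using hd.mul (hd.add_const (2 * ‖c‖))
  have herr : (fun i => ⟪a i, y i⟫ ^ 2 - ⟪c, y i⟫ ^ 2) =o[atTop] fun i => ‖y i‖ ^ 2 := by
    refine IsBigO.trans_isLittleO (g := fun i => δ i * ‖y i‖ ^ 2) ?_ ?_
    · refine isBigO_of_le _ fun i => ?_
      rw [Real.norm_eq_abs, Real.norm_of_nonneg (by positivity)]
      exact abs_inner_sq_sub_inner_sq_le _ _ _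
    · simpa using ((isLittleO_one_iff ℝ).2 hδ).mul_isBigO (isBigO_refl (fun i => ‖y i‖ ^ 2) _)
  simpa only [smul_eq_mul, ← mul_add, ← sum_add_distrib, sub_add_cancel, zero_add] using
    (tendsto_inv_smul_sum_range_of_isLittleO herr (fun i => by positivity) hy).add hcy

theorem tendsto_inv_sum_range_smul_sum_range {E : Type*} [NormedAddCommGroup E]
    [NormedSpace ℝ E] {u : ℕ → ℝ} {v : ℕ → E} {p : ℝ} {μ : E} (hp : p ≠ 0)
    (hu : Tendsto (fun n : ℕ => (n : ℝ)⁻¹ * ∑ i ∈ range n, u i) atTop (𝓝 p))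
    (hv : Tendsto (fun n : ℕ => (n : ℝ)⁻¹ • ∑ i ∈ range n, v i) atTop (𝓝 μ)) :
    Tendsto (fun n : ℕ => (∑ i ∈ range n, u i)⁻¹ • ∑ i ∈ range n, v i) atTop (𝓝 (p⁻¹ • μ)) := by
  refine ((hu.inv₀ hp).smul hv).congr' ?_
  filter_upwards [eventually_ne_atTop 0] with n hn
  rw [smul_smul, mul_inv, inv_inv, mul_right_comm, mul_inv_cancel₀ (by exact_mod_cast hn), one_mul]

theorem strong_law_ae_comp {Ω 𝒳 E : Type*} {mΩ : MeasurableSpace Ω} {P : Measure Ω}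
    {m𝒳 : MeasurableSpace 𝒳} [NormedAddCommGroup E] [NormedSpace ℝ E] [CompleteSpace E]
    {X : ℕ → Ω → 𝒳} (hXmeas : ∀ i, Measurable (X i)) (hXindep : iIndepFun X P)
    (hXident : ∀ i, P.map (X i) = P.map (X 1)) {f : 𝒳 → E} (hf : StronglyMeasurable f)
    (hint : Integrable (fun ω => f (X 1 ω)) P) :
    ∀ᵐ ω ∂P, Tendsto (fun n : ℕ => (n : ℝ)⁻¹ • ∑ i ∈ range n, f (X (i + 1) ω)) atTop
      (𝓝 (∫ ω, f (X 1 ω) ∂P)) := by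
  borelize E
  have hfm : Measurable f := hf.measurable
  exact strong_law_ae (fun i ω => f (X (i + 1) ω)) hint
    (fun i j hij => (hXindep.indepFun (by omega)).comp hfm hfm)
    (fun i => IdentDistrib.comp
      ⟨(hXmeas _).aemeasurable, (hXmeas 1).aemeasurable, hXident _⟩ hfm)

theorem payoff_second_order_slln_general
    {Ω : Type*} {mΩ : MeasurableSpace Ω} {P : Measure Ω} [IsProbabilityMeasure P]
    {𝒳 : Type*} {m𝒳 : MeasurableSpace 𝒳}
    (X : ℕ → Ω → 𝒳) (hXmeas : ∀ i, Measurable (X i))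
    (hXindep : iIndepFun (m := fun _ => m𝒳) X P)
    (hXident : ∀ i, Measure.map (X i) P = Measure.map (X 1) P)
    {H : Type*} [NormedAddCommGroup H] [InnerProductSpace ℝ H] [CompleteSpace H]
    (ξ : 𝒳 → H) (hξ : StronglyMeasurable ξ)
    (M : 𝒳 → ℝ) (hMmeas : Measurable M) (hMpos : ∀ x, 0 < M x)
    (g : ℕ → Ω → 𝒳 → ℝ)
    (hg : ∀ t ω x, g t ω x =
      (∑ i ∈ Finset.Icc 1 (t - 1), ⟪ξ (X i ω), ξ x⟫) /
        (∑ i ∈ Finset.Icc 1 (t - 1), M (X i ω)))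
    (hnormsq_int : Integrable (fun ω => ‖ξ (X 1 ω)‖ ^ 2) P)
    (hM_int : Integrable (fun ω => M (X 1 ω)) P)
    (gstar : 𝒳 → ℝ)
    (hgstar : ∀ x, gstar x = (∫ ω, ⟪ξ (X 1 ω), ξ x⟫ ∂P) / ∫ ω, M (X 1 ω) ∂P) :
    ∀ᵐ ω ∂P,
      Tendsto (fun t : ℕ => (1 / (t : ℝ)) * ∑ i ∈ Finset.Icc 1 t, (g i ω (X i ω)) ^ 2)
        atTop (𝓝 (∫ ω', (gstar (X 1 ω')) ^ 2 ∂P)) := by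
  have hξL2 : MemLp (fun ω => ξ (X 1 ω)) 2 P := (memLp_two_iff_integrable_sq_norm
    (hξ.comp_measurable (hXmeas 1)).aestronglyMeasurable).2 hnormsq_int
  have hξint : Integrable (fun ω => ξ (X 1 ω)) P := hξL2.integrable one_le_two
  set m := ∫ ω, M (X 1 ω) ∂P
  have hm : 0 < m := by
    rw [integral_pos_iff_support_of_nonneg (fun ω => (hMpos _).le) hM_int,
      Function.support_eq_univ fun ω => (hMpos _).ne']
    simp
  set c : H := m⁻¹ • ∫ ω, ξ (X 1 ω) ∂P
  have hgstar_eq : ∀ x, gstar x = ⟪c, ξ x⟫ := fun x => by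
    rw [hgstar, real_inner_smul_left, real_inner_comm, ← integral_inner hξint, inv_mul_eq_div]
    simp_rw [real_inner_comm (ξ x)]
  -- for `j = 0` both sides vanish through `x / 0 = 0` and `0⁻¹ = 0`
  have hg_eq : ∀ j ω x, g (j + 1) ω x =
      ⟪(∑ i ∈ range j, M (X (i + 1) ω))⁻¹ • ∑ i ∈ range j, ξ (X (i + 1) ω), ξ x⟫ := by
    intro j ω x
    rw [hg, add_tsub_cancel_right, sum_Icc_one_eq_sum_range, sum_Icc_one_eq_sum_range,
      real_inner_smul_left, sum_inner, inv_mul_eq_div]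
  filter_upwards [strong_law_ae_comp hXmeas hXindep hXident hξ hξint,
    strong_law_ae_comp hXmeas hXindep hXident hMmeas.stronglyMeasurable hM_int,
    strong_law_ae_comp hXmeas hXindep hXident (hξ.norm.pow 2) hnormsq_int,
    strong_law_ae_comp hXmeas hXindep hXident (f := fun x => ⟪c, ξ x⟫ ^ 2)
      ((stronglyMeasurable_const.inner hξ).pow 2)
      (hξL2.const_inner c).integrable_sq]
    with ω hξω hMω hnormω hcω
  simp only [smul_eq_mul] at hMω hnormω hcω
  have hratio := tendsto_inv_sum_range_smul_sum_range hm.ne' hMω hξω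
  simp only [hgstar_eq]
  refine (tendsto_inv_mul_sum_range_inner_sq hratio hnormω hcω).congr fun t => ?_
  simp only [one_div, sum_Icc_one_eq_sum_range, hg_eq]

/-- Let `(X_t)_{t ≥ 1}` be i.i.d. `𝒳`-valued random variables, `H` a separable real Hilbert
space, `ξ : 𝒳 → H` strongly measurable, and `h(x, y) = ⟪ξ x, ξ y⟫`. Let `M : 𝒳 → (0, ∞)`
be measurable with `h(x, y) ≥ -M(x)` for all `x, y`, and define payoffs
`g_t(x) = (∑_{i=1}^{t-1} h(X_i, x)) / (∑_{i=1}^{t-1} M(X_i))` (so `g_1 = 0`). If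
`E ‖ξ(X₁)‖² < ∞` and `E M(X₁) < ∞`, then, with `g*(x) = E[h(X₁, x)] / E[M(X₁)]`, almost
surely `(1/t) ∑_{i=1}^t g_i(X_i)² → E[g*(X₁)²]`. -/
theorem payoff_second_order_slln
    {Ω : Type*} {mΩ : MeasurableSpace Ω} {P : Measure Ω} [IsProbabilityMeasure P]
    {𝒳 : Type*} {m𝒳 : MeasurableSpace 𝒳}
    (X : ℕ → Ω → 𝒳) (hXmeas : ∀ i, Measurable (X i))
    (hXindep : iIndepFun (m := fun _ => m𝒳) X P)
    (hXident : ∀ i, Measure.map (X i) P = Measure.map (X 1) P)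
    {H : Type*} [NormedAddCommGroup H] [InnerProductSpace ℝ H] [CompleteSpace H]
    [SecondCountableTopology H]
    (ξ : 𝒳 → H) (hξ : StronglyMeasurable ξ)
    (M : 𝒳 → ℝ) (hMmeas : Measurable M) (hMpos : ∀ x, 0 < M x)
    (hMbound : ∀ x y, -(M x) ≤ ⟪ξ x, ξ y⟫)
    (g : ℕ → Ω → 𝒳 → ℝ)
    (hg : ∀ t ω x, g t ω x =
      (∑ i ∈ Finset.Icc 1 (t - 1), ⟪ξ (X i ω), ξ x⟫) /
        (∑ i ∈ Finset.Icc 1 (t - 1), M (X i ω)))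
    (hnormsq_int : Integrable (fun ω => ‖ξ (X 1 ω)‖ ^ 2) P)
    (hM_int : Integrable (fun ω => M (X 1 ω)) P)
    (gstar : 𝒳 → ℝ)
    (hgstar : ∀ x, gstar x = (∫ ω, ⟪ξ (X 1 ω), ξ x⟫ ∂P) / ∫ ω, M (X 1 ω) ∂P) :
    ∀ᵐ ω ∂P,
      Tendsto (fun t : ℕ => (1 / (t : ℝ)) * ∑ i ∈ Finset.Icc 1 t, (g i ω (X i ω)) ^ 2)
        atTop (𝓝 (∫ ω', (gstar (X 1 ω')) ^ 2 ∂P)) :=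
  payoff_second_order_slln_general (mΩ := mΩ) X hXmeas hXindep hXident ξ hξ M hMmeas hMpos g hg
    hnormsq_int hM_int gstar hgstar
end

section
/- Let d ≥ 3 and d_h ≥ 1, let B be a real d × d_h matrix with operator norm ‖B‖_op, let b ∈ ℝ^d and c ∈ ℝ^{d_h}, and define s : ℝ^d → ℝ^d by s(x) = b − x + (1/2)·B·φ((1/2)·Bᵀx + c), where φ applies tanh entrywise. Define h_p : ℝ^d × ℝ^d → ℝ by h_p(x, x̃) = ⟨s(x), s(x̃)⟩·(1 + ‖x − x̃‖²)^{−1/2} + (1 + ‖x − x̃‖²)^{−3/2}·⟨s(x̃) − s(x), x − x̃⟩ + (−3(1 + ‖x − x̃‖²)^{−5/2}·‖x − x̃‖² + d·(1 + ‖x − x̃‖²)^{−3/2}). Then for all x, x̃ ∈ ℝ^d, h_p(x, x̃) ≥ −((‖s(x̃)‖ + 1 + ‖B‖_op·√(d_h))·‖s(x̃)‖ + ‖B‖_op·√(d_h) + 1). -/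
open scoped RealInnerProductSpace

/-- Entrywise hyperbolic tangent `φ(y)_i = tanh (y_i) = (e^{2 y_i} - 1)/(e^{2 y_i} + 1)`. -/
noncomputable def entrywiseTanh {n : ℕ} (y : EuclideanSpace ℝ (Fin n)) :
    EuclideanSpace ℝ (Fin n) :=
  WithLp.toLp 2 (fun i => Real.tanh (y i))

/-- The score function of the Gaussian-Bernoulli restricted Boltzmann machine:
`s(x) = b - x + (1/2) B φ((1/2) Bᵀ x + c)`, with `φ` applying `tanh` entrywise. -/
noncomputable def rbmScore {d dh : ℕ} (B : Matrix (Fin d) (Fin dh) ℝ)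
    (b : EuclideanSpace ℝ (Fin d)) (c : EuclideanSpace ℝ (Fin dh))
    (x : EuclideanSpace ℝ (Fin d)) : EuclideanSpace ℝ (Fin d) :=
  b - x + (1 / 2 : ℝ) •
    Matrix.toEuclideanLin B (entrywiseTanh ((1 / 2 : ℝ) • Matrix.toEuclideanLin B.transpose x + c))

/-!
The RBM score is the Gaussian score `b - x` plus a term of norm at most `M / 2`, where
`M = ‖B‖_op √dh`, because `|tanh| < 1`. Hence `s(x̃) - s(x) = (x - x̃) + δ` with `‖δ‖ ≤ M`, which
gives `‖s(x)‖ ≤ ‖s(x̃)‖ + r + M` and `⟪s(x̃) - s(x), x - x̃⟫ ≥ r² - M r` for `r = ‖x - x̃‖`.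
With `t = (1 + r²)^(-1/2)` we have `r t ≤ 1`, so the three terms of the kernel are bounded below
by `-(‖s(x̃)‖ + 1 + M) ‖s(x̃)‖`, by `-M`, and (as `d ≥ 3`) by `0`.
-/

lemma norm_entrywiseTanh_le {n : ℕ} (y : EuclideanSpace ℝ (Fin n)) :
    ‖entrywiseTanh y‖ ≤ Real.sqrt n := by
  rw [EuclideanSpace.norm_eq]
  refine Real.sqrt_le_sqrt ?_
  calc ∑ i, ‖entrywiseTanh y i‖ ^ 2 ≤ ∑ _i : Fin n, (1 : ℝ) :=
        Finset.sum_le_sum fun i _ => by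
          simpa [entrywiseTanh, Real.norm_eq_abs, sq_abs] using (Real.tanh_sq_lt_one (y i)).le
    _ = n := by simp

lemma norm_toEuclideanLin_entrywiseTanh_le {d dh : ℕ} (B : Matrix (Fin d) (Fin dh) ℝ)
    (y : EuclideanSpace ℝ (Fin dh)) :
    ‖Matrix.toEuclideanLin B (entrywiseTanh y)‖ ≤
      ‖LinearMap.toContinuousLinearMap (Matrix.toEuclideanLin B)‖ * Real.sqrt dh :=
  calc ‖LinearMap.toContinuousLinearMap (Matrix.toEuclideanLin B) (entrywiseTanh y)‖
      _ ≤ ‖LinearMap.toContinuousLinearMap (Matrix.toEuclideanLin B)‖ * ‖entrywiseTanh y‖ :=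
        ContinuousLinearMap.le_opNorm _ _
      _ ≤ _ := by gcongr; exact norm_entrywiseTanh_le y

lemma norm_rbmScore_sub_rbmScore_sub_le {d dh : ℕ} (B : Matrix (Fin d) (Fin dh) ℝ)
    (b : EuclideanSpace ℝ (Fin d)) (c : EuclideanSpace ℝ (Fin dh))
    (x y : EuclideanSpace ℝ (Fin d)) :
    ‖rbmScore B b c y - rbmScore B b c x - (x - y)‖ ≤
      ‖LinearMap.toContinuousLinearMap (Matrix.toEuclideanLin B)‖ * Real.sqrt dh := by
  set q : EuclideanSpace ℝ (Fin d) → EuclideanSpace ℝ (Fin d) := fun z =>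
    Matrix.toEuclideanLin B (entrywiseTanh ((1 / 2 : ℝ) • Matrix.toEuclideanLin B.transpose z + c))
  have hq : rbmScore B b c y - rbmScore B b c x - (x - y) = (1 / 2 : ℝ) • (q y - q x) := by
    simp only [rbmScore, q, smul_sub]
    abel
  rw [hq, norm_smul, Real.norm_of_nonneg (by norm_num)]
  linarith [norm_sub_le (q y) (q x), norm_toEuclideanLin_entrywiseTanh_le B
    ((1 / 2 : ℝ) • Matrix.toEuclideanLin B.transpose y + c), norm_toEuclideanLin_entrywiseTanh_le B
    ((1 / 2 : ℝ) • Matrix.toEuclideanLin B.transpose x + c)]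

lemma rpow_neg_half_pow {u : ℝ} (hu : 0 ≤ u) (k : ℕ) :
    (u ^ (-(1 / 2) : ℝ)) ^ k = u ^ (-(k / 2) : ℝ) := by
  rw [← Real.rpow_natCast, ← Real.rpow_mul hu]
  ring_nf

lemma rpow_neg_half_sq_mul_self {u : ℝ} (hu : 0 < u) : (u ^ (-(1 / 2) : ℝ)) ^ 2 * u = 1 := by
  rw [rpow_neg_half_pow hu.le]
  norm_num [Real.rpow_neg_one, hu.ne']

lemma neg_le_imq_weighted_sum {t r N M X W d : ℝ} (ht : 0 < t) (htr : t ^ 2 * (1 + r ^ 2) = 1)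
    (hN : 0 ≤ N) (hM : 0 ≤ M) (hd : 3 ≤ d)
    (hX : -((N + r + M) * N) ≤ X) (hW : r ^ 2 - M * r ≤ W) :
    -((N + 1 + M) * N + M) ≤ X * t + t ^ 3 * W + (-3 * t ^ 5 * r ^ 2 + d * t ^ 3) := by
  have ht1 : t ≤ 1 := by nlinarith
  have hrt : r * t ≤ 1 := by nlinarith
  have hXt : -((N + 1 + M) * N) ≤ X * t := by
    nlinarith [mul_le_mul_of_nonneg_right hX ht.le, mul_le_mul_of_nonneg_right hrt hN,
      mul_le_of_le_one_right hN ht1, mul_le_of_le_one_right hM ht1]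
  have hWt : -M ≤ t ^ 3 * W := by
    have ht3r : t ^ 3 * r ≤ 1 := by nlinarith [mul_nonneg (sub_nonneg.mpr hrt) (sq_nonneg t)]
    nlinarith [mul_le_mul_of_nonneg_left hW (pow_nonneg ht.le 3),
      mul_le_mul_of_nonneg_left ht3r hM, mul_nonneg (pow_nonneg ht.le 3) (sq_nonneg r)]
  -- `t ^ 2 r ^ 2 = 1 - t ^ 2`, so the last term is `(d - 3) t ^ 3 + 3 t ^ 5`.
  have hlast : 0 ≤ -3 * t ^ 5 * r ^ 2 + d * t ^ 3 := by
    have : t ^ 5 * r ^ 2 = t ^ 3 - t ^ 5 := by linear_combination t ^ 3 * htr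
    nlinarith [pow_pos ht 3, pow_pos ht 5]
  linarith

section SteinKernel

variable {E : Type*} [NormedAddCommGroup E] [InnerProductSpace ℝ E]

noncomputable def imqSteinKernel (d : ℝ) (s : E → E) (x y : E) : ℝ :=
  ⟪s x, s y⟫ * (1 + ‖x - y‖ ^ 2) ^ (-(1 / 2) : ℝ)
    + (1 + ‖x - y‖ ^ 2) ^ (-(3 / 2) : ℝ) * ⟪s y - s x, x - y⟫
    + (-3 * (1 + ‖x - y‖ ^ 2) ^ (-(5 / 2) : ℝ) * ‖x - y‖ ^ 2
      + d * (1 + ‖x - y‖ ^ 2) ^ (-(3 / 2) : ℝ))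

theorem neg_le_imqSteinKernel {d M : ℝ} (hd : 3 ≤ d) {s : E → E}
    (hs : ∀ x y, ‖s y - s x - (x - y)‖ ≤ M) (x y : E) :
    -((‖s y‖ + 1 + M) * ‖s y‖ + M) ≤ imqSteinKernel d s x y := by
  have hM : 0 ≤ M := (norm_nonneg _).trans (hs 0 0)
  set δ := s y - s x - (x - y) with hδ
  have hsx : ‖s x‖ ≤ ‖s y‖ + ‖x - y‖ + M := by
    have : s x = s y - (x - y) - δ := by rw [hδ]; abel
    rw [this]
    linarith [norm_sub_le (s y - (x - y)) δ, norm_sub_le (s y) (x - y), hs x y]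
  have hX : -((‖s y‖ + ‖x - y‖ + M) * ‖s y‖) ≤ ⟪s x, s y⟫ :=
    calc -((‖s y‖ + ‖x - y‖ + M) * ‖s y‖) ≤ -(‖s x‖ * ‖s y‖) := by
          gcongr
      _ ≤ ⟪s x, s y⟫ := neg_le_of_abs_le (abs_real_inner_le_norm _ _)
  have hW : ‖x - y‖ ^ 2 - M * ‖x - y‖ ≤ ⟪s y - s x, x - y⟫ := by
    have : s y - s x = (x - y) + δ := by rw [hδ]; abel
    rw [this, inner_add_left, real_inner_self_eq_norm_sq]
    have := neg_le_of_abs_le (abs_real_inner_le_norm δ (x - y))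
    nlinarith [mul_le_mul_of_nonneg_right (hs x y) (norm_nonneg (x - y))]
  set u := 1 + ‖x - y‖ ^ 2
  have hu : 0 < u := by positivity
  have h3 := rpow_neg_half_pow hu.le 3
  have h5 := rpow_neg_half_pow hu.le 5
  norm_num at h3 h5
  rw [imqSteinKernel, ← h3, ← h5]
  exact neg_le_imq_weighted_sum (by positivity) (rpow_neg_half_sq_mul_self hu)
    (norm_nonneg _) hM hd hX hW

end SteinKernel

theorem rbm_stein_kernel_lower_bound_general (d dh : ℕ) (hd : 3 ≤ d)
    (B : Matrix (Fin d) (Fin dh) ℝ)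
    (b : EuclideanSpace ℝ (Fin d)) (c : EuclideanSpace ℝ (Fin dh))
    (s : EuclideanSpace ℝ (Fin d) → EuclideanSpace ℝ (Fin d))
    (hs : ∀ x, s x = rbmScore B b c x)
    (h : EuclideanSpace ℝ (Fin d) → EuclideanSpace ℝ (Fin d) → ℝ)
    (hh : ∀ x y, h x y =
      ⟪s x, s y⟫ * (1 + ‖x - y‖ ^ 2) ^ (-(1 / 2) : ℝ)
        + (1 + ‖x - y‖ ^ 2) ^ (-(3 / 2) : ℝ) * ⟪s y - s x, x - y⟫
        + (-3 * (1 + ‖x - y‖ ^ 2) ^ (-(5 / 2) : ℝ) * ‖x - y‖ ^ 2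
            + d * (1 + ‖x - y‖ ^ 2) ^ (-(3 / 2) : ℝ))) :
    ∀ x y,
      -((‖s y‖ + 1 + ‖LinearMap.toContinuousLinearMap (Matrix.toEuclideanLin B)‖ * Real.sqrt dh)
            * ‖s y‖
          + ‖LinearMap.toContinuousLinearMap (Matrix.toEuclideanLin B)‖ * Real.sqrt dh + 1)
        ≤ h x y := by
  intro x y
  obtain rfl : s = rbmScore B b c := funext hs
  have hkernel : h x y = imqSteinKernel d (rbmScore B b c) x y := hh x y
  have hbound := neg_le_imqSteinKernel (d := d) (by exact_mod_cast hd)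
    (norm_rbmScore_sub_rbmScore_sub_le B b c) x y
  linarith

/-- For the RBM score `s` on `ℝ^d` with `d ≥ 3`, `dh ≥ 1`, the Langevin Stein kernel with IMQ
base kernel satisfies
`h_p(x, y) ≥ -((‖s(y)‖ + 1 + ‖B‖_op √dh) ‖s(y)‖ + ‖B‖_op √dh + 1)` for all `x, y`
(`y` playing the role of `x̃`), where `‖B‖_op` is the operator norm of `B` with respect to
Euclidean norms. -/
theorem rbm_stein_kernel_lower_bound (d dh : ℕ) (hd : 3 ≤ d) (hdh : 1 ≤ dh)
    (B : Matrix (Fin d) (Fin dh) ℝ)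
    (b : EuclideanSpace ℝ (Fin d)) (c : EuclideanSpace ℝ (Fin dh))
    (s : EuclideanSpace ℝ (Fin d) → EuclideanSpace ℝ (Fin d))
    (hs : ∀ x, s x = rbmScore B b c x)
    (h : EuclideanSpace ℝ (Fin d) → EuclideanSpace ℝ (Fin d) → ℝ)
    (hh : ∀ x y, h x y =
      ⟪s x, s y⟫ * (1 + ‖x - y‖ ^ 2) ^ (-(1 / 2) : ℝ)
        + (1 + ‖x - y‖ ^ 2) ^ (-(3 / 2) : ℝ) * ⟪s y - s x, x - y⟫
        + (-3 * (1 + ‖x - y‖ ^ 2) ^ (-(5 / 2) : ℝ) * ‖x - y‖ ^ 2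
            + d * (1 + ‖x - y‖ ^ 2) ^ (-(3 / 2) : ℝ))) :
    ∀ x y,
      -((‖s y‖ + 1 + ‖LinearMap.toContinuousLinearMap (Matrix.toEuclideanLin B)‖ * Real.sqrt dh)
            * ‖s y‖
          + ‖LinearMap.toContinuousLinearMap (Matrix.toEuclideanLin B)‖ * Real.sqrt dh + 1)
        ≤ h x y :=
  rbm_stein_kernel_lower_bound_general d dh hd B b c s hs h hh
end
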